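/- Let k ≥ 1, let n be a multiple of k, let α ∈ (0, 1/(100k)) with αn a positive integer, and set m = kαn. Let a ∈ [k]^n be an advice vector, let A ⊆ {−1,1}^n be nonempty with indicator function f, and let D be a distribution on {−1,1}^k with E_{b∼D}[b_j] = 0 for every j ∈ [k]. Then E_M[‖p_{M,D,a} − U‖_tvd²] ≤ (2^{2n}/|A|²) · Σ_{ℓ=2}^{kαn} h(ℓ) · Σ_{v∈{0,1}^n : |v|=ℓ} f̂(v)², where the expectation is over M drawn uniformly from the a-respecting partial permutation matrices, U is the uniform distribution on {−1,1}^m, |v| denotes Hamming weight, and h(ℓ) = max_{v∈{0,1}^n : |v|=ℓ} Pr_M[there exists s ∈ {0,1}^m with s ≠ 0, Hamming weight of s(i) different from 1 for every i ∈ [αn], and Mᵀs = v]. -/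

import Mathlib

open scoped Classical

/-- The sign of a Boolean coordinate: `false ↦ 1`, `true ↦ −1` (so that Boolean `xor`
corresponds to multiplication of signs). -/
def sgn (b : Bool) : ℝ := if b then -1 else 1

/-- The row index of the `t`-th coordinate of the `i`-th block of `k` rows. -/
def blk {k a : ℕ} (i : Fin a) (t : Fin k) : Fin (k * a) :=
  ⟨k * i.val + t.val, by
    have ht := t.isLt
    have hi := i.isLt
    have h1 : k * i.val + t.val < k * (i.val + 1) := by
      have : k * (i.val + 1) = k * i.val + k := by ring
      omega
    exact lt_of_lt_of_le h1 (Nat.mul_le_mul_left k hi)⟩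

/-- The `a`-respecting partial permutation matrices (encoded by the injective map sending
each row to the column of its unique 1): `M_{rj} = 1` forces `adv j ≡ r (mod k)`. -/
noncomputable def respMatchings (k c a : ℕ) (adv : Fin (k * c) → Fin k) :
    Finset (Fin (k * a) → Fin (k * c)) :=
  Finset.univ.filter fun π => Function.Injective π ∧
    ∀ r : Fin (k * a), (adv (π r)).val = r.val % k

/-- The posterior distribution `p_{M,D,a}(z) = E_{x ∼ Unif(A)} E_{b ∼ D^{αn}}[1{z = (Mx)⊙b}]`,
with `{−1,1}` encoded by `Bool` (so that `⊙` is `xor`). -/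
noncomputable def postDist {k c a : ℕ} (A : Finset (Fin (k * c) → Bool))
    (D : (Fin k → Bool) → ℝ) (π : Fin (k * a) → Fin (k * c))
    (z : Fin (k * a) → Bool) : ℝ :=
  (A.card : ℝ)⁻¹ * ∑ x ∈ A, ∑ b : Fin (k * a) → Bool,
    (∏ i : Fin a, D (fun t => b (blk i t))) *
      (if z = (fun r => xor (x (π r)) (b r)) then 1 else 0)

/-- The total variation distance of `p` to the uniform distribution on `{−1,1}^{kαn}`. -/
noncomputable def tvdToUnif {m : ℕ} (p : (Fin m → Bool) → ℝ) : ℝ :=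
  (1 / 2) * ∑ z : Fin m → Bool, |p z - ((2 : ℝ) ^ m)⁻¹|

/-- The Fourier coefficient `f̂(v)` of the indicator function of `A ⊆ {−1,1}^n`. -/
noncomputable def fhatCoeff {n : ℕ} (A : Finset (Fin n → Bool)) (v : Fin n → Bool) : ℝ :=
  ((2 : ℝ) ^ n)⁻¹ * ∑ x : Fin n → Bool,
    (if x ∈ A then 1 else 0) * ∏ j, (if v j then sgn (x j) else 1)

/-- The Hamming weight of a 0/1 vector. -/
def wt {n : ℕ} (v : Fin n → Bool) : ℕ := (Finset.univ.filter fun j => v j = true).card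

/-- `h(ℓ)`: the maximum over `v` of Hamming weight `ℓ` of the probability (over a uniform
`a`-respecting `M`) that `v = Mᵀs` for some `s ≠ 0` all of whose `k`-blocks have Hamming
weight different from 1. -/
noncomputable def hprob (k c a : ℕ) (adv : Fin (k * c) → Fin k) (ℓ : ℕ) : ℝ :=
  sSup {x : ℝ | ∃ v : Fin (k * c) → Bool, wt v = ℓ ∧
    x = ((respMatchings k c a adv).card : ℝ)⁻¹ *
      (((respMatchings k c a adv).filter fun π =>
        ∃ s : Fin (k * a) → Bool,
          (∃ r, s r = true) ∧
          (∀ i : Fin a,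
            (Finset.univ.filter fun t : Fin k => s (blk i t) = true).card ≠ 1) ∧
          (∀ j : Fin (k * c),
            (Finset.univ.filter fun r : Fin (k * a) => π r = j ∧ s r = true).card =
              (if v j then 1 else 0))).card : ℝ)}

/-! By Cauchy–Schwarz and Parseval, `‖p − U‖²_tvd ≤ ¼ ∑_{s ≠ 0} p̂(s)²`. The noise is independent
across blocks, so `p̂(s) = (2ⁿ/|A|) f̂(Mᵀs) ∏ᵢ D̂(s(i))`; every `|D̂| ≤ 1`, and `D̂` vanishes on
weight-one blocks because the marginals of `D` are balanced. Hence only admissible `s` (nonzero,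
no block of weight one) contribute, each at most `(2²ⁿ/|A|²) f̂(Mᵀs)²`. For a fixed `M` the map
`s ↦ Mᵀs` is injective and weight-preserving, so averaging over `M` weights each `f̂(v)²` by
`Pr_M[v = Mᵀs for an admissible s] ≤ h(|v|)`, and this probability vanishes unless
`2 ≤ |v| ≤ kαn`. -/

lemma abs_sgn (b : Bool) : |sgn b| = 1 := by cases b <;> simp [sgn]

lemma sgn_xor (u v : Bool) : sgn (xor u v) = sgn u * sgn v := by
  cases u <;> cases v <;> simp [sgn]

section Fourier

variable {ι : Type*} [Fintype ι]

/-- The character `z ↦ ∏_{r ∈ s} z_r` of `{−1,1}^ι`, with both `s` and `z` encoded by `Bool`. -/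
noncomputable def chi (s z : ι → Bool) : ℝ := ∏ r, if s r then sgn (z r) else 1

lemma chi_comm (s z : ι → Bool) : chi s z = chi z s :=
  Finset.prod_congr rfl fun r _ => by cases s r <;> cases z r <;> rfl

lemma chi_xor (s z w : ι → Bool) : chi s (fun r => xor (z r) (w r)) = chi s z * chi s w := by
  rw [chi, chi, chi, ← Finset.prod_mul_distrib]
  exact Finset.prod_congr rfl fun r _ => by cases s r <;> simp [sgn_xor]

lemma abs_chi (s z : ι → Bool) : |chi s z| = 1 := by
  rw [chi, Finset.abs_prod]
  exact Finset.prod_eq_one fun r _ => by cases s r <;> simp [abs_sgn]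

@[simp]
lemma chi_false (z : ι → Bool) : chi (fun _ => false) z = 1 := by simp [chi]

variable [DecidableEq ι]

/-- Unnormalised, so that `fhatCoeff A v = 2⁻ⁿ * walshCoeff 1_A v`. -/
noncomputable def walshCoeff (q : (ι → Bool) → ℝ) (s : ι → Bool) : ℝ := ∑ z, q z * chi s z

lemma sum_chi (s : ι → Bool) :
    ∑ z, chi s z = if s = (fun _ => false) then (2 : ℝ) ^ Fintype.card ι else 0 := by
  split_ifs with hs
  · simp [hs]
  · obtain ⟨r, hr⟩ := Function.ne_iff.1 hs
    have hr : s r = true := by simpa using hr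
    have hprod : ∑ z, chi s z = ∏ r, ∑ b : Bool, (if s r then sgn b else 1) :=
      (Fintype.prod_sum fun r b => if s r then sgn b else 1).symm
    rw [hprod]
    exact Finset.prod_eq_zero (Finset.mem_univ r) (by simp [hr, sgn])

lemma sum_chi_mul_chi (z w : ι → Bool) :
    ∑ s, chi s z * chi s w = if z = w then (2 : ℝ) ^ Fintype.card ι else 0 := by
  have hxor : (fun r => xor (z r) (w r)) = (fun _ => false) ↔ z = w := by
    simp only [funext_iff]
    exact forall_congr' fun r => by cases z r <;> cases w r <;> simp
  simp_rw [← chi_xor, chi_comm _ (fun r => xor (z r) (w r)), sum_chi, hxor]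

lemma sum_sq_walshCoeff (q : (ι → Bool) → ℝ) :
    ∑ s, walshCoeff q s ^ 2 = 2 ^ Fintype.card ι * ∑ z, q z ^ 2 := by
  calc ∑ s, walshCoeff q s ^ 2 = ∑ z, ∑ w, q z * q w * ∑ s, chi s z * chi s w := by
        simp_rw [walshCoeff, sq, Finset.sum_mul_sum, Finset.mul_sum]
        rw [Finset.sum_comm]
        refine Finset.sum_congr rfl fun z _ => ?_
        rw [Finset.sum_comm]
        exact Finset.sum_congr rfl fun w _ => Finset.sum_congr rfl fun s _ => by ring
    _ = 2 ^ Fintype.card ι * ∑ z, q z ^ 2 := by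
        simp_rw [sum_chi_mul_chi, mul_ite, mul_zero, Finset.sum_ite_eq, Finset.mem_univ,
          if_true, Finset.mul_sum]
        exact Finset.sum_congr rfl fun z _ => by ring

lemma walshCoeff_false (q : (ι → Bool) → ℝ) : walshCoeff q (fun _ => false) = ∑ z, q z := by
  simp [walshCoeff]

lemma walshCoeff_sub_const (p : (ι → Bool) → ℝ) (c : ℝ) (s : ι → Bool) :
    walshCoeff (fun z => p z - c) s =
      walshCoeff p s - c * if s = (fun _ => false) then (2 : ℝ) ^ Fintype.card ι else 0 := by
  simp only [walshCoeff, sub_mul, Finset.sum_sub_distrib, ← Finset.mul_sum, sum_chi]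

lemma abs_walshCoeff_le_one {D : (ι → Bool) → ℝ} (hD0 : ∀ b, 0 ≤ D b) (hD1 : ∑ b, D b = 1)
    (s : ι → Bool) : |walshCoeff D s| ≤ 1 :=
  calc |walshCoeff D s| ≤ ∑ y, |D y * chi s y| := Finset.abs_sum_le_sum_abs _ _
    _ = 1 := by simp_rw [abs_mul, abs_chi, mul_one, abs_of_nonneg (hD0 _), hD1]

end Fourier

lemma sq_tvdToUnif_le {m : ℕ} (p : (Fin m → Bool) → ℝ) (hp : ∑ z, p z = 1) :
    tvdToUnif p ^ 2 ≤ (1 / 4) * ∑ s ∈ Finset.univ.erase (fun _ => false), walshCoeff p s ^ 2 := by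
  set q : (Fin m → Bool) → ℝ := fun z => p z - ((2 : ℝ) ^ m)⁻¹
  have hq0 : walshCoeff q (fun _ => false) = 0 := by
    rw [walshCoeff_sub_const, if_pos rfl, Fintype.card_fin,
      inv_mul_cancel₀ (by positivity), walshCoeff]
    simp [hp]
  have hq : ∀ s ∈ Finset.univ.erase (fun _ => false), walshCoeff q s = walshCoeff p s :=
    fun s hs => by rw [walshCoeff_sub_const, if_neg (Finset.ne_of_mem_erase hs), mul_zero, sub_zero]
  calc tvdToUnif p ^ 2 = (1 / 4) * (∑ z, |q z|) ^ 2 := by rw [tvdToUnif]; ring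
    _ ≤ (1 / 4) * (2 ^ m * ∑ z, q z ^ 2) := by
        gcongr
        simpa using sq_sum_le_card_mul_sum_sq (s := Finset.univ) (f := fun z => |q z|)
    _ = (1 / 4) * ∑ s, walshCoeff q s ^ 2 := by rw [sum_sq_walshCoeff, Fintype.card_fin]
    _ = (1 / 4) * ∑ s ∈ Finset.univ.erase (fun _ => false), walshCoeff p s ^ 2 := by
        rw [← Finset.add_sum_erase _ _ (Finset.mem_univ _), hq0,
          Finset.sum_congr rfl fun s hs => by rw [hq s hs]]
        ring

lemma walshCoeff_eq_zero_of_wt_eq_one {k : ℕ} {D : (Fin k → Bool) → ℝ}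
    (hmarg : ∀ j : Fin k, ∑ b : Fin k → Bool, D b * sgn (b j) = 0) {s : Fin k → Bool}
    (hs : wt s = 1) : walshCoeff D s = 0 := by
  obtain ⟨t₀, ht₀⟩ := Finset.card_eq_one.1 hs
  have hchi : ∀ y, chi s y = sgn (y t₀) := fun y => by
    rw [chi, ← Finset.prod_filter (fun t => s t = true) (fun t => sgn (y t)), ht₀,
      Finset.prod_singleton]
  simp_rw [walshCoeff, hchi]
  exact hmarg t₀

lemma wt_comp_le {m n : ℕ} {f : Fin m → Fin n} (hf : Function.Injective f) (s : Fin n → Bool) :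
    wt (fun t => s (f t)) ≤ wt s :=
  Finset.card_le_card_of_injOn f (fun t ht => by simpa using ht) hf.injOn

lemma wt_le {n : ℕ} (s : Fin n → Bool) : wt s ≤ n :=
  (Finset.card_filter_le _ _).trans (by simp)

section Blocks

variable {k a : ℕ}

def blkEquiv (k a : ℕ) : Fin a × Fin k ≃ Fin (k * a) :=
  finProdFinEquiv.trans (finCongr (Nat.mul_comm a k))

lemma blkEquiv_apply (i : Fin a) (t : Fin k) : blkEquiv k a (i, t) = blk i t := by
  ext
  simp [blkEquiv, blk, Nat.add_comm]

lemma blk_injective (i : Fin a) : Function.Injective (blk (k := k) i) := fun t t' h => by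
  rw [← blkEquiv_apply, ← blkEquiv_apply] at h
  exact (Prod.ext_iff.1 ((blkEquiv k a).injective h)).2

lemma prod_blocks {M : Type*} [CommMonoid M] (F : Fin (k * a) → M) :
    ∏ r, F r = ∏ i : Fin a, ∏ t : Fin k, F (blk i t) := by
  rw [← (blkEquiv k a).prod_comp, Fintype.prod_prod_type]
  simp only [blkEquiv_apply]

lemma sum_prod_blocks {R : Type*} [CommSemiring R] (G : Fin a → (Fin k → Bool) → R) :
    ∑ b : Fin (k * a) → Bool, ∏ i, G i (fun t => b (blk i t)) = ∏ i, ∑ y, G i y := by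
  let e : (Fin a → Fin k → Bool) ≃ (Fin (k * a) → Bool) :=
    (Equiv.curry _ _ _).symm.trans ((blkEquiv k a).arrowCongr (Equiv.refl _))
  have he : ∀ g i t, e g (blk i t) = g i t := fun g i t => by
    simp [e, ← blkEquiv_apply]
  rw [← e.sum_comp, Fintype.prod_sum]
  simp only [he]

end Blocks

noncomputable def admissible (k a : ℕ) : Finset (Fin (k * a) → Bool) :=
  Finset.univ.filter fun s => (∃ r, s r = true) ∧ ∀ i : Fin a, wt (fun t => s (blk i t)) ≠ 1

lemma two_le_wt_of_mem_admissible {k a : ℕ} {s : Fin (k * a) → Bool} (hs : s ∈ admissible k a) :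
    2 ≤ wt s := by
  obtain ⟨⟨r, hr⟩, hblocks⟩ := (Finset.mem_filter.1 hs).2
  obtain ⟨⟨i, t⟩, rfl⟩ := (blkEquiv k a).surjective r
  rw [blkEquiv_apply] at hr
  have hpos : 0 < wt (fun t => s (blk i t)) := Finset.card_pos.2 ⟨t, by simpa using hr⟩
  have := hblocks i
  have := wt_comp_le (blk_injective i) s
  omega

section Transpose

variable {ρ κ : Type*} {π : ρ → κ}

/-- `Mᵀ s` for the partial permutation matrix `M` whose row `r` has its `1` in column `π r`. -/
noncomputable def transposeVec (π : ρ → κ) (s : ρ → Bool) : κ → Bool :=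
  fun j => decide (∃ r, π r = j ∧ s r = true)

@[simp]
lemma transposeVec_false (π : ρ → κ) : transposeVec π (fun _ => false) = fun _ => false := by
  funext j
  simp [transposeVec]

lemma transposeVec_comp (hπ : Function.Injective π) (s : ρ → Bool) (r : ρ) :
    transposeVec π s (π r) = s r := by
  cases h : s r <;> simp [transposeVec, hπ.eq_iff, h]

lemma transposeVec_injective (hπ : Function.Injective π) :
    Function.Injective (transposeVec π) := fun s s' h => by
  funext r
  rw [← transposeVec_comp hπ s r, ← transposeVec_comp hπ s' r, h]

lemma chi_comp [Fintype ρ] [Fintype κ] (hπ : Function.Injective π) (s : ρ → Bool)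
    (x : κ → Bool) : chi s (fun r => x (π r)) = chi (transposeVec π s) x := by
  refine Fintype.prod_of_injective π hπ _ _ (fun j hj => ?_) fun r => by
    rw [transposeVec_comp hπ]
  have : transposeVec π s j = false := by
    simpa [transposeVec] using fun r hr => (hj ⟨r, hr⟩).elim
  simp [this]

lemma card_filter_eq_transposeVec [Fintype ρ] [DecidableEq κ] (hπ : Function.Injective π)
    (s : ρ → Bool) (j : κ) :
    (Finset.univ.filter fun r => π r = j ∧ s r = true).card =
      if transposeVec π s j then 1 else 0 := by
  by_cases h : ∃ r, π r = j ∧ s r = true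
  · obtain ⟨r₀, rfl, hr₀⟩ := h
    rw [transposeVec_comp hπ, hr₀, if_pos rfl, Finset.card_eq_one]
    refine ⟨r₀, Finset.ext fun r => ?_⟩
    simp only [Finset.mem_filter, Finset.mem_univ, true_and, Finset.mem_singleton, hπ.eq_iff]
    exact ⟨And.left, fun h => ⟨h, h ▸ hr₀⟩⟩
  · have hj : transposeVec π s j = false := by simpa [transposeVec] using h
    rw [hj, if_neg Bool.false_ne_true, Finset.card_eq_zero, Finset.filter_eq_empty_iff]
    exact fun r _ hr => h ⟨r, hr⟩

end Transpose

lemma wt_transposeVec {m n : ℕ} {π : Fin m → Fin n} (hπ : Function.Injective π)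
    (s : Fin m → Bool) : wt (transposeVec π s) = wt s := by
  rw [wt, wt, ← Finset.card_image_of_injective _ hπ]
  congr 1
  ext j
  simp [transposeVec, and_comm]

lemma sum_chi_eq_fhatCoeff {n : ℕ} (A : Finset (Fin n → Bool)) (v : Fin n → Bool) :
    ∑ x ∈ A, chi v x = 2 ^ n * fhatCoeff A v := by
  rw [fhatCoeff, ← mul_assoc, mul_inv_cancel₀ (by positivity), one_mul]
  simp only [ite_mul, one_mul, zero_mul, Finset.sum_ite_mem, Finset.univ_inter]
  rfl

section Posterior

variable {k c a : ℕ} {A : Finset (Fin (k * c) → Bool)} {D : (Fin k → Bool) → ℝ}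
  {π : Fin (k * a) → Fin (k * c)}

lemma sum_prod_mul_chi (s : Fin (k * a) → Bool) :
    ∑ b : Fin (k * a) → Bool, (∏ i : Fin a, D (fun t => b (blk i t))) * chi s b =
      ∏ i, walshCoeff D (fun t => s (blk i t)) := by
  have hchi : ∀ b, chi s b = ∏ i, chi (fun t => s (blk i t)) (fun t => b (blk i t)) :=
    fun b => prod_blocks _
  simp_rw [hchi, ← Finset.prod_mul_distrib]
  exact sum_prod_blocks fun i y => D y * chi (fun t => s (blk i t)) y

lemma walshCoeff_postDist (hπ : Function.Injective π) (s : Fin (k * a) → Bool) :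
    walshCoeff (postDist A D π) s = (A.card : ℝ)⁻¹ * 2 ^ (k * c) *
      fhatCoeff A (transposeVec π s) * ∏ i, walshCoeff D (fun t => s (blk i t)) := by
  calc walshCoeff (postDist A D π) s
      = (A.card : ℝ)⁻¹ * ∑ x ∈ A, ∑ b : Fin (k * a) → Bool,
          (∏ i : Fin a, D (fun t => b (blk i t))) * chi s (fun r => xor (x (π r)) (b r)) := by
        simp only [walshCoeff, postDist, Finset.sum_mul, Finset.mul_sum, mul_assoc]
        rw [Finset.sum_comm]
        refine Finset.sum_congr rfl fun x _ => ?_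
        rw [Finset.sum_comm]
        refine Finset.sum_congr rfl fun b _ => ?_
        simp [Finset.sum_ite_eq']
    _ = (A.card : ℝ)⁻¹ * (∑ x ∈ A, chi s (fun r => x (π r))) *
          ∑ b : Fin (k * a) → Bool, (∏ i : Fin a, D (fun t => b (blk i t))) * chi s b := by
        rw [mul_assoc, Finset.sum_mul_sum]
        congr 1
        exact Finset.sum_congr rfl fun x _ => Finset.sum_congr rfl fun b _ => by
          rw [chi_xor]; ring
    _ = _ := by
        simp only [chi_comp hπ, sum_chi_eq_fhatCoeff, sum_prod_mul_chi]
        ring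

lemma sum_postDist (hA : A.Nonempty) (hD1 : ∑ b, D b = 1) (hπ : Function.Injective π) :
    ∑ z, postDist A D π z = 1 := by
  have hf : (2 : ℝ) ^ (k * c) * fhatCoeff A (fun _ => false) = A.card := by
    simp [← sum_chi_eq_fhatCoeff]
  rw [← walshCoeff_false, walshCoeff_postDist hπ, transposeVec_false, mul_assoc _ (2 ^ _),
    hf, inv_mul_cancel₀ (by exact_mod_cast hA.card_pos.ne')]
  simp [walshCoeff_false, hD1]

lemma sq_walshCoeff_postDist_le (hD0 : ∀ b, 0 ≤ D b) (hD1 : ∑ b, D b = 1)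
    (hπ : Function.Injective π) (s : Fin (k * a) → Bool) :
    walshCoeff (postDist A D π) s ^ 2 ≤
      (2 : ℝ) ^ (2 * (k * c)) / (A.card : ℝ) ^ 2 * fhatCoeff A (transposeVec π s) ^ 2 := by
  have hprod : (∏ i, walshCoeff D (fun t => s (blk i t))) ^ 2 ≤ 1 := by
    rw [sq_le_one_iff_abs_le_one, Finset.abs_prod]
    exact Finset.prod_le_one (fun _ _ => abs_nonneg _)
      fun i _ => abs_walshCoeff_le_one hD0 hD1 _
  rw [walshCoeff_postDist hπ, mul_pow]
  calc ((A.card : ℝ)⁻¹ * 2 ^ (k * c) * fhatCoeff A (transposeVec π s)) ^ 2 *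
        (∏ i, walshCoeff D (fun t => s (blk i t))) ^ 2
      ≤ ((A.card : ℝ)⁻¹ * 2 ^ (k * c) * fhatCoeff A (transposeVec π s)) ^ 2 :=
        mul_le_of_le_one_right (sq_nonneg _) hprod
    _ = _ := by ring

lemma walshCoeff_postDist_eq_zero
    (hmarg : ∀ j : Fin k, ∑ b : Fin k → Bool, D b * sgn (b j) = 0)
    (hπ : Function.Injective π) {s : Fin (k * a) → Bool} {i : Fin a}
    (hi : wt (fun t => s (blk i t)) = 1) : walshCoeff (postDist A D π) s = 0 := by
  rw [walshCoeff_postDist hπ,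
    Finset.prod_eq_zero (Finset.mem_univ i) (walshCoeff_eq_zero_of_wt_eq_one hmarg hi), mul_zero]

lemma sq_tvdToUnif_postDist_le (hA : A.Nonempty) (hD0 : ∀ b, 0 ≤ D b) (hD1 : ∑ b, D b = 1)
    (hmarg : ∀ j : Fin k, ∑ b : Fin k → Bool, D b * sgn (b j) = 0)
    (hπ : Function.Injective π) :
    tvdToUnif (postDist A D π) ^ 2 ≤ (2 : ℝ) ^ (2 * (k * c)) / (A.card : ℝ) ^ 2 *
      ∑ s ∈ admissible k a, fhatCoeff A (transposeVec π s) ^ 2 := by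
  have hsub : admissible k a ⊆ Finset.univ.erase (fun _ => false) := fun s hs => by
    obtain ⟨⟨r, hr⟩, -⟩ := (Finset.mem_filter.1 hs).2
    exact Finset.mem_erase.2 ⟨fun h => by simp [h] at hr, Finset.mem_univ s⟩
  have hzero : ∀ s ∈ Finset.univ.erase (fun _ => false), s ∉ admissible k a →
      walshCoeff (postDist A D π) s ^ 2 = 0 := fun s hs hadm => by
    have hne : ∃ r, s r = true := by
      simpa [funext_iff] using Finset.ne_of_mem_erase hs
    obtain ⟨i, hi⟩ : ∃ i, wt (fun t => s (blk i t)) = 1 := by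
      simpa [admissible, hne] using hadm
    rw [walshCoeff_postDist_eq_zero hmarg hπ hi, sq, mul_zero]
  calc tvdToUnif (postDist A D π) ^ 2
      ≤ 1 / 4 * ∑ s ∈ Finset.univ.erase (fun _ => false), walshCoeff (postDist A D π) s ^ 2 :=
        sq_tvdToUnif_le _ (sum_postDist hA hD1 hπ)
    _ ≤ ∑ s ∈ admissible k a, walshCoeff (postDist A D π) s ^ 2 := by
        rw [← Finset.sum_subset hsub hzero]
        have := Finset.sum_nonneg fun s (_ : s ∈ admissible k a) =>
          sq_nonneg (walshCoeff (postDist A D π) s)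
        linarith
    _ ≤ _ := by
        rw [Finset.mul_sum]
        exact Finset.sum_le_sum fun s _ => sq_walshCoeff_postDist_le hD0 hD1 hπ s

end Posterior

lemma inv_card_mul_sum_sum {γ β : Type*} [Fintype β] [DecidableEq β] (R : Finset γ)
    (T : γ → Finset β) (g : β → ℝ) :
    (R.card : ℝ)⁻¹ * ∑ π ∈ R, ∑ v ∈ T π, g v =
      ∑ v, g v * ((R.card : ℝ)⁻¹ * (R.filter fun π => v ∈ T π).card) := by
  rw [Finset.sum_comm' (t' := Finset.univ) (s' := fun v => R.filter fun π => v ∈ T π)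
    (by simp), Finset.mul_sum]
  refine Finset.sum_congr rfl fun v _ => ?_
  rw [Finset.sum_const, nsmul_eq_mul]
  ring

/-- `hprob k c a adv ℓ` is, definitionally, the supremum of `transposeProb k c a adv v` over
`wt v = ℓ`. -/
noncomputable def transposeProb (k c a : ℕ) (adv : Fin (k * c) → Fin k) (v : Fin (k * c) → Bool) :
    ℝ :=
  ((respMatchings k c a adv).card : ℝ)⁻¹ *
    (((respMatchings k c a adv).filter fun π =>
      ∃ s : Fin (k * a) → Bool,
        (∃ r, s r = true) ∧
        (∀ i : Fin a,
          (Finset.univ.filter fun t : Fin k => s (blk i t) = true).card ≠ 1) ∧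
        (∀ j : Fin (k * c),
          (Finset.univ.filter fun r : Fin (k * a) => π r = j ∧ s r = true).card =
            (if v j then 1 else 0))).card : ℝ)

lemma transposeProb_le_hprob {k c a : ℕ} (adv : Fin (k * c) → Fin k) (v : Fin (k * c) → Bool) :
    transposeProb k c a adv v ≤ hprob k c a adv (wt v) :=
  le_csSup ((Set.finite_range (transposeProb k c a adv)).bddAbove.mono <| by
    rintro _ ⟨w, -, rfl⟩
    exact ⟨w, rfl⟩) ⟨v, rfl, rfl⟩

lemma injective_of_mem_respMatchings {k c a : ℕ} {adv : Fin (k * c) → Fin k}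
    {π : Fin (k * a) → Fin (k * c)} (hπ : π ∈ respMatchings k c a adv) : Function.Injective π :=
  (Finset.mem_filter.1 hπ).2.1

lemma mem_image_transposeVec_iff {k c a : ℕ} {π : Fin (k * a) → Fin (k * c)}
    (hπ : Function.Injective π) (v : Fin (k * c) → Bool) :
    v ∈ (admissible k a).image (transposeVec π) ↔
      ∃ s : Fin (k * a) → Bool,
        (∃ r, s r = true) ∧
        (∀ i : Fin a,
          (Finset.univ.filter fun t : Fin k => s (blk i t) = true).card ≠ 1) ∧
        (∀ j : Fin (k * c),
          (Finset.univ.filter fun r : Fin (k * a) => π r = j ∧ s r = true).card =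
            (if v j then 1 else 0)) := by
  have hcount : ∀ s, (∀ j, (if transposeVec π s j then 1 else 0) = (if v j then 1 else 0)) ↔
      transposeVec π s = v := fun s => by
    simp only [funext_iff]
    exact forall_congr' fun j => by cases transposeVec π s j <;> cases v j <;> simp
  simp only [Finset.mem_image, admissible, Finset.mem_filter, Finset.mem_univ, true_and, and_assoc]
  refine exists_congr fun s => and_congr_right' (and_congr_right' ?_)
  rw [← hcount]
  simp only [card_filter_eq_transposeVec hπ]

lemma wt_mem_Icc_of_mem_image {k c a : ℕ} {π : Fin (k * a) → Fin (k * c)}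
    (hπ : Function.Injective π) {v : Fin (k * c) → Bool}
    (hv : v ∈ (admissible k a).image (transposeVec π)) : wt v ∈ Finset.Icc 2 (k * a) := by
  obtain ⟨s, hs, rfl⟩ := Finset.mem_image.1 hv
  rw [wt_transposeVec hπ, Finset.mem_Icc]
  exact ⟨two_le_wt_of_mem_admissible hs, wt_le s⟩

section Averaging

variable {k c a : ℕ} (adv : Fin (k * c) → Fin k)

lemma transposeProb_eq_card_filter_mem_image (v : Fin (k * c) → Bool) :
    transposeProb k c a adv v =
      ((respMatchings k c a adv).card : ℝ)⁻¹ * ((respMatchings k c a adv).filter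
        fun π => v ∈ (admissible k a).image (transposeVec π)).card := by
  rw [transposeProb, Finset.filter_congr fun π hπ =>
    mem_image_transposeVec_iff (injective_of_mem_respMatchings hπ) v]

lemma transposeProb_eq_zero {v : Fin (k * c) → Bool} (hv : wt v ∉ Finset.Icc 2 (k * a)) :
    transposeProb k c a adv v = 0 := by
  have hempty : ((respMatchings k c a adv).filter fun π =>
      v ∈ (admissible k a).image (transposeVec π)) = ∅ :=
    Finset.filter_eq_empty_iff.2 fun π hπ hvπ =>
      hv (wt_mem_Icc_of_mem_image (injective_of_mem_respMatchings hπ) hvπ)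
  rw [transposeProb_eq_card_filter_mem_image, hempty, Finset.card_empty, Nat.cast_zero, mul_zero]

lemma sum_mul_transposeProb_le {g : (Fin (k * c) → Bool) → ℝ} (hg : ∀ v, 0 ≤ g v) :
    ∑ v, g v * transposeProb k c a adv v ≤
      ∑ ℓ ∈ Finset.Icc 2 (k * a), hprob k c a adv ℓ * ∑ v with wt v = ℓ, g v := by
  calc ∑ v, g v * transposeProb k c a adv v
      = ∑ v with wt v ∈ Finset.Icc 2 (k * a), g v * transposeProb k c a adv v := by
        refine (Finset.sum_filter_of_ne fun v _ h => ?_).symm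
        by_contra hv
        exact h (by rw [transposeProb_eq_zero adv hv, mul_zero])
    _ ≤ ∑ v with wt v ∈ Finset.Icc 2 (k * a), g v * hprob k c a adv (wt v) := by
        gcongr with v
        exacts [hg v, transposeProb_le_hprob adv v]
    _ = _ := by
        rw [← Finset.sum_fiberwise_eq_sum_filter]
        refine Finset.sum_congr rfl fun ℓ _ => ?_
        rw [Finset.mul_sum]
        refine Finset.sum_congr rfl fun v hv => ?_
        rw [(Finset.mem_filter.1 hv).2, mul_comm]

end Averaging

theorem advice_rmd_fourier_bound_general (k c a : ℕ)
    (adv : Fin (k * c) → Fin k)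
    (A : Finset (Fin (k * c) → Bool)) (hA : A.Nonempty)
    (D : (Fin k → Bool) → ℝ) (hD0 : ∀ b, 0 ≤ D b) (hD1 : ∑ b, D b = 1)
    (hmarg : ∀ j : Fin k, ∑ b : Fin k → Bool, D b * sgn (b j) = 0) :
    ((respMatchings k c a adv).card : ℝ)⁻¹ *
        ∑ π ∈ respMatchings k c a adv, (tvdToUnif (postDist A D π)) ^ 2 ≤
      ((2 : ℝ) ^ (2 * (k * c)) / ((A.card : ℝ) ^ 2)) *
        ∑ ℓ ∈ Finset.Icc 2 (k * a), hprob k c a adv ℓ *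
          ∑ v ∈ Finset.univ.filter fun v : Fin (k * c) → Bool => wt v = ℓ,
            (fhatCoeff A v) ^ 2 := by
  set C : ℝ := 2 ^ (2 * (k * c)) / (A.card : ℝ) ^ 2
  calc ((respMatchings k c a adv).card : ℝ)⁻¹ *
        ∑ π ∈ respMatchings k c a adv, tvdToUnif (postDist A D π) ^ 2
      ≤ ((respMatchings k c a adv).card : ℝ)⁻¹ * ∑ π ∈ respMatchings k c a adv,
          C * ∑ v ∈ (admissible k a).image (transposeVec π), fhatCoeff A v ^ 2 := by
        gcongr with π hR
        have hπ := injective_of_mem_respMatchings hR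
        rw [Finset.sum_image (transposeVec_injective hπ).injOn]
        exact sq_tvdToUnif_postDist_le hA hD0 hD1 hmarg hπ
    _ = C * ∑ v, fhatCoeff A v ^ 2 * transposeProb k c a adv v := by
        rw [← Finset.mul_sum, mul_left_comm, inv_card_mul_sum_sum]
        simp_rw [← transposeProb_eq_card_filter_mem_image]
    _ ≤ _ := by
        gcongr
        exact sum_mul_transposeProb_le adv fun v => sq_nonneg _

/-- Lemma 6.4 of the paper: the Fourier-analytic bound on the expected squared total
variation distance of the posterior distribution from uniform, for distributions `D` on
`{−1,1}^k` with uniform marginals. -/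
theorem advice_rmd_fourier_bound (k c a : ℕ) (hk : 0 < k) (hc : 0 < c) (ha : 0 < a)
    (α : ℝ) (hα0 : 0 < α) (hα1 : α < 1 / (100 * (k : ℝ)))
    (hαn : (a : ℝ) = α * (k * c))
    (adv : Fin (k * c) → Fin k)
    (hadv : ∀ i : Fin k, (Finset.univ.filter fun j => adv j = i).card = c)
    (A : Finset (Fin (k * c) → Bool)) (hA : A.Nonempty)
    (D : (Fin k → Bool) → ℝ) (hD0 : ∀ b, 0 ≤ D b) (hD1 : ∑ b, D b = 1)
    (hmarg : ∀ j : Fin k, ∑ b : Fin k → Bool, D b * sgn (b j) = 0) :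
    ((respMatchings k c a adv).card : ℝ)⁻¹ *
        ∑ π ∈ respMatchings k c a adv, (tvdToUnif (postDist A D π)) ^ 2 ≤
      ((2 : ℝ) ^ (2 * (k * c)) / ((A.card : ℝ) ^ 2)) *
        ∑ ℓ ∈ Finset.Icc 2 (k * a), hprob k c a adv ℓ *
          ∑ v ∈ Finset.univ.filter fun v : Fin (k * c) → Bool => wt v = ℓ,
            (fhatCoeff A v) ^ 2 :=
  advice_rmd_fourier_bound_general k c a adv A hA D hD0 hD1 hmarg
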